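/- arXiv:0902.1031 — 2 statements merged into one kernel-verified Lean document; each statement's English description precedes it below -/
import Mathlib

section
/- Let F be a field of characteristic ≠ 2 and let φ, φ′ be quadratic forms on finite-dimensional F-vector spaces V, V′. The natural embeddings V ↪ V ⊕ V′ and V′ ↪ V ⊕ V′ induce F-algebra homomorphisms C(φ) → C(φ ⊥ φ′) and C(φ′) → C(φ ⊥ φ′); the images of the even parts C₀(φ) and C₀(φ′) under these maps centralize each other, and the resulting F-algebra homomorphism C₀(φ) ⊗_F C₀(φ′) → C₀(φ ⊥ φ′) is injective. -/
/-!
The Clifford algebra of an orthogonal sum is the ℤ/2-graded tensor product of the Clifford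
algebras of the summands (`CliffordAlgebra.prodEquiv`). On even elements the Koszul signs of the
graded tensor product disappear, so the even parts commute in `C(Q₁ ⊥ Q₂)` and the induced
map `C₀(Q₁) ⊗ C₀(Q₂) → C(Q₁ ⊥ Q₂)` is the restriction of that isomorphism along
`C₀(Q₁) ⊗ C₀(Q₂) → C(Q₁) ⊗ C(Q₂)`. The latter is injective because each `C₀(Qᵢ)` is a direct
summand of `C(Qᵢ)`, with complement the odd part.
-/

open scoped TensorProduct

theorem TensorProduct.map_injective_of_leftInverse {R M N M' N' : Type*} [CommRing R]
    [AddCommGroup M] [Module R M] [AddCommGroup N] [Module R N]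
    [AddCommGroup M'] [Module R M'] [AddCommGroup N'] [Module R N']
    {f : M →ₗ[R] N} {g : M' →ₗ[R] N'} {f' : N →ₗ[R] M} {g' : N' →ₗ[R] M'}
    (hf : f' ∘ₗ f = LinearMap.id) (hg : g' ∘ₗ g = LinearMap.id) :
    Function.Injective (TensorProduct.map f g) := by
  refine Function.LeftInverse.injective (g := TensorProduct.map f' g') fun t => ?_
  rw [← LinearMap.comp_apply, ← TensorProduct.map_comp, hf, hg, TensorProduct.map_id,
    LinearMap.id_apply]

namespace CliffordAlgebra

variable {R M N M₁ M₂ : Type*} [CommRing R] [AddCommGroup M] [Module R M]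
  [AddCommGroup N] [Module R N] [AddCommGroup M₁] [Module R M₁] [AddCommGroup M₂] [Module R M₂]

theorem map_mem_even {Q : QuadraticForm R M} {Q' : QuadraticForm R N} (f : Q →qᵢ Q')
    {x : CliffordAlgebra Q} (hx : x ∈ even Q) : map f x ∈ even Q' := by
  induction x, hx using even_induction with
  | algebraMap r => simpa only [AlgHom.commutes] using (even Q').algebraMap_mem r
  | add a b _ _ iha ihb => simpa only [map_add] using (even Q').add_mem iha ihb
  | ι_mul_ι_mul m₁ m₂ a _ ih =>
    rw [map_mul, map_mul, map_apply_ι, map_apply_ι]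
    exact (even Q').mul_mem (ι_mul_ι_mem_evenOdd_zero Q' (f m₁) (f m₂)) ih

variable (Q₁ : QuadraticForm R M₁) (Q₂ : QuadraticForm R M₂)

theorem commute_map_inl_map_inr_of_mem_even {x : CliffordAlgebra Q₁} {y : CliffordAlgebra Q₂}
    (hx : x ∈ even Q₁) (hy : y ∈ even Q₂) :
    Commute (map (QuadraticMap.Isometry.inl Q₁ Q₂) x)
      (map (QuadraticMap.Isometry.inr Q₁ Q₂) y) :=
  commute_map_mul_map_of_isOrtho_of_mem_evenOdd_zero_left _ _ QuadraticMap.IsOrtho.inl_inr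
    _ _ hx hy

def evenTensorToProd : even Q₁ ⊗[R] even Q₂ →ₐ[R] CliffordAlgebra (Q₁.prod Q₂) :=
  Algebra.TensorProduct.lift ((map (QuadraticMap.Isometry.inl Q₁ Q₂)).comp (even Q₁).val)
    ((map (QuadraticMap.Isometry.inr Q₁ Q₂)).comp (even Q₂).val)
    fun x y => commute_map_inl_map_inr_of_mem_even Q₁ Q₂ x.prop y.prop

@[simp]
theorem evenTensorToProd_tmul (x : even Q₁) (y : even Q₂) :
    evenTensorToProd Q₁ Q₂ (x ⊗ₜ y) =
      map (QuadraticMap.Isometry.inl Q₁ Q₂) (x : CliffordAlgebra Q₁) *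
        map (QuadraticMap.Isometry.inr Q₁ Q₂) (y : CliffordAlgebra Q₂) :=
  Algebra.TensorProduct.lift_tmul _ _ _ x y

theorem evenTensorToProd_mem_even (t : even Q₁ ⊗[R] even Q₂) :
    evenTensorToProd Q₁ Q₂ t ∈ even (Q₁.prod Q₂) := by
  induction t with
  | zero => simpa only [map_zero] using (even _).zero_mem
  | add a b iha ihb => simpa only [map_add] using (even _).add_mem iha ihb
  | tmul x y =>
    rw [evenTensorToProd_tmul]
    exact (even _).mul_mem (map_mem_even _ x.prop) (map_mem_even _ y.prop)

theorem evenTensorToProd_toLinearMap :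
    (evenTensorToProd Q₁ Q₂).toLinearMap =
      (toProd Q₁ Q₂).toLinearMap
        ∘ₗ (GradedTensorProduct.of R (evenOdd Q₁) (evenOdd Q₂)).toLinearMap
        ∘ₗ TensorProduct.map (even Q₁).val.toLinearMap (even Q₂).val.toLinearMap := by
  ext x y
  rfl

theorem evenTensorToProd_injective : Function.Injective (evenTensorToProd Q₁ Q₂) := by
  change Function.Injective (evenTensorToProd Q₁ Q₂).toLinearMap
  rw [evenTensorToProd_toLinearMap]
  exact (prodEquiv Q₁ Q₂).symm.injective.comp <|
    (GradedTensorProduct.of _ _ _).injective.comp <| TensorProduct.map_injective_of_leftInverse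
      (Submodule.projectionOnto_comp_subtype (evenOdd_isCompl Q₁))
      (Submodule.projectionOnto_comp_subtype (evenOdd_isCompl Q₂))

end CliffordAlgebra

open CliffordAlgebra QuadraticMap

theorem even_clifford_tensor_embedding_general
    (F : Type) [Field F]
    (V V' : Type) [AddCommGroup V] [Module F V] [AddCommGroup V'] [Module F V']
    (φ : QuadraticForm F V) (φ' : QuadraticForm F V') :
    -- the images of the even parts centralize each other
    (∀ (x : even φ) (y : even φ'),
      Commute (CliffordAlgebra.map (QuadraticMap.Isometry.inl φ φ') (x : CliffordAlgebra φ))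
        (CliffordAlgebra.map (QuadraticMap.Isometry.inr φ φ') (y : CliffordAlgebra φ'))) ∧
    -- there is a (necessarily unique) algebra homomorphism from the tensor product of the
    -- even parts, determined on pure tensors, ...
    (∃ h : (even φ ⊗[F] even φ') →ₐ[F] CliffordAlgebra (φ.prod φ'),
      ∀ (x : even φ) (y : even φ'),
        h (x ⊗ₜ[F] y) = CliffordAlgebra.map (QuadraticMap.Isometry.inl φ φ') (x : CliffordAlgebra φ) *
          CliffordAlgebra.map (QuadraticMap.Isometry.inr φ φ') (y : CliffordAlgebra φ')) ∧
    -- ... and any such homomorphism is injective and lands in the even part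
    (∀ h : (even φ ⊗[F] even φ') →ₐ[F] CliffordAlgebra (φ.prod φ'),
      (∀ (x : even φ) (y : even φ'),
        h (x ⊗ₜ[F] y) = CliffordAlgebra.map (QuadraticMap.Isometry.inl φ φ') (x : CliffordAlgebra φ) *
          CliffordAlgebra.map (QuadraticMap.Isometry.inr φ φ') (y : CliffordAlgebra φ')) →
      Function.Injective h ∧ ∀ t, h t ∈ even (φ.prod φ')) := by
  refine ⟨fun x y => commute_map_inl_map_inr_of_mem_even φ φ' x.prop y.prop,
    ⟨evenTensorToProd φ φ', evenTensorToProd_tmul φ φ'⟩, fun h hh => ?_⟩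
  obtain rfl : h = evenTensorToProd φ φ' :=
    Algebra.TensorProduct.ext' fun x y => (hh x y).trans (evenTensorToProd_tmul φ φ' x y).symm
  exact ⟨evenTensorToProd_injective φ φ', evenTensorToProd_mem_even φ φ'⟩

/-- The even Clifford algebras of two quadratic forms embed into the Clifford algebra of their
orthogonal sum with commuting (mutually centralizing) images, and the induced homomorphism
from their tensor product is injective with image inside the even part. -/
theorem even_clifford_tensor_embedding
    (F : Type) [Field F] (hF : (2:F) ≠ 0)
    (V V' : Type) [AddCommGroup V] [Module F V] [AddCommGroup V'] [Module F V']
    [FiniteDimensional F V] [FiniteDimensional F V']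
    (φ : QuadraticForm F V) (φ' : QuadraticForm F V') :
    -- the images of the even parts centralize each other
    (∀ (x : even φ) (y : even φ'),
      Commute (CliffordAlgebra.map (QuadraticMap.Isometry.inl φ φ') (x : CliffordAlgebra φ))
        (CliffordAlgebra.map (QuadraticMap.Isometry.inr φ φ') (y : CliffordAlgebra φ'))) ∧
    -- there is a (necessarily unique) algebra homomorphism from the tensor product of the
    -- even parts, determined on pure tensors, ...
    (∃ h : (even φ ⊗[F] even φ') →ₐ[F] CliffordAlgebra (φ.prod φ'),
      ∀ (x : even φ) (y : even φ'),
        h (x ⊗ₜ[F] y) = CliffordAlgebra.map (QuadraticMap.Isometry.inl φ φ') (x : CliffordAlgebra φ) *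
          CliffordAlgebra.map (QuadraticMap.Isometry.inr φ φ') (y : CliffordAlgebra φ')) ∧
    -- ... and any such homomorphism is injective and lands in the even part
    (∀ h : (even φ ⊗[F] even φ') →ₐ[F] CliffordAlgebra (φ.prod φ'),
      (∀ (x : even φ) (y : even φ'),
        h (x ⊗ₜ[F] y) = CliffordAlgebra.map (QuadraticMap.Isometry.inl φ φ') (x : CliffordAlgebra φ) *
          CliffordAlgebra.map (QuadraticMap.Isometry.inr φ φ') (y : CliffordAlgebra φ')) →
      Function.Injective h ∧ ∀ t, h t ∈ even (φ.prod φ')) :=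
  even_clifford_tensor_embedding_general F V V' φ φ'
end

section
/- Let F be a field of characteristic ≠ 2, L/F a quadratic field extension with nontrivial F-automorphism ι, and (V,ψ) a finite-dimensional quadratic space over L. Then the switch map s(v,w) = (w,v) on V ⊕ ^ιV extends to an additive, ι-semilinear ring automorphism s of the Clifford algebra C(ψ ⊥ ^ιψ) satisfying s∘s = id, which preserves the even/odd grading and commutes with the canonical involution of C(ψ ⊥ ^ιψ). -/
section Conj
variable {F L : Type} [Field F] [Field L] [Algebra F L]

/-- The conjugate of an `L`-module along a ring automorphism `ιL` of `L`: the same additive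
group with the scalar action twisted by `ιL`. -/
def Conj (ιL : L ≃ₐ[F] L) (V : Type) : Type := V

instance Conj.addCommGroup (ιL : L ≃ₐ[F] L) (V : Type) [AddCommGroup V] :
    AddCommGroup (Conj ιL V) := inferInstanceAs (AddCommGroup V)

instance Conj.module (ιL : L ≃ₐ[F] L) (V : Type) [AddCommGroup V] [Module L V] :
    Module L (Conj ιL V) := Module.compHom V (ιL.toRingEquiv.toRingHom)

/-- The identity map, viewed as a map into the conjugate module. -/
def toConj (ιL : L ≃ₐ[F] L) (V : Type) : V → Conj ιL V := fun v => v

/-- The identity map, viewed as a map out of the conjugate module. -/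
def ofConj (ιL : L ≃ₐ[F] L) (V : Type) : Conj ιL V → V := fun v => v

lemma Conj.smul_def (ιL : L ≃ₐ[F] L) (V : Type) [AddCommGroup V] [Module L V]
    (c : L) (v : Conj ιL V) : c • v = toConj ιL V (ιL c • ofConj ιL V v) := rfl

variable (ιL : L ≃ₐ[F] L) (V : Type) [AddCommGroup V] [Module L V]

/-- The conjugate quadratic form `^ιψ` on the conjugate module. -/
noncomputable def conjForm (hι : Function.Involutive ιL) (ψ : QuadraticForm L V) :
    QuadraticForm L (Conj ιL V) where
  toFun v := ιL (ψ (ofConj ιL V v))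
  toFun_smul a v := by
    rw [Conj.smul_def]
    show ιL (ψ (ιL a • ofConj ιL V v)) = (a * a) • ιL (ψ (ofConj ιL V v))
    rw [QuadraticMap.map_smul, smul_eq_mul, map_mul, map_mul, hι a, smul_eq_mul]
  exists_companion' := by
    obtain ⟨B, hB⟩ := ψ.exists_companion
    refine ⟨LinearMap.mk₂ L
      (fun x y => ιL (B (ofConj ιL V x) (ofConj ιL V y))) ?_ ?_ ?_ ?_, ?_⟩
    · intro x x' y
      show ιL (B (ofConj ιL V x + ofConj ιL V x') (ofConj ιL V y)) = _
      rw [map_add, LinearMap.add_apply, map_add]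
    · intro a x y
      show ιL (B (ιL a • ofConj ιL V x) (ofConj ιL V y)) = a * ιL (B (ofConj ιL V x) (ofConj ιL V y))
      rw [map_smul, LinearMap.smul_apply, smul_eq_mul, map_mul, hι a]
    · intro x y y'
      show ιL (B (ofConj ιL V x) (ofConj ιL V y + ofConj ιL V y')) = _
      rw [map_add, map_add]
    · intro a x y
      show ιL (B (ofConj ιL V x) (ιL a • ofConj ιL V y)) = a * ιL (B (ofConj ιL V x) (ofConj ιL V y))
      rw [map_smul, smul_eq_mul, map_mul, hι a]
    · intro x y
      show ιL (ψ (ofConj ιL V x + ofConj ιL V y)) = _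
      rw [hB, map_add, map_add]
      rfl
end Conj

/-!
The switch `s` is `ι`-semilinear and `(ψ ⊥ ^ιψ)(s x) = ι((ψ ⊥ ^ιψ)(x))`, so it is an `L`-linear
isometry from `V ⊕ ^ιV` into the conjugate algebra `^ι C(ψ ⊥ ^ιψ)`, and the universal property of
the Clifford algebra extends it to an `ι`-semilinear ring endomorphism of `C(ψ ⊥ ^ιψ)`. That it is
an involution, preserves the grading and commutes with the reverse is then checked on generators.
-/

section ConjAlgebra
variable {F L : Type} [Field F] [Field L] [Algebra F L] (ιL : L ≃ₐ[F] L)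

instance Conj.ring (A : Type) [Ring A] : Ring (Conj ιL A) := inferInstanceAs (Ring A)

instance Conj.algebra (A : Type) [Ring A] [Algebra L A] : Algebra L (Conj ιL A) :=
  Algebra.ofModule (fun r x y => smul_mul_assoc (ιL r) (ofConj ιL A x) (ofConj ιL A y))
    (fun r x y => mul_smul_comm (ιL r) (ofConj ιL A x) (ofConj ιL A y))

lemma Conj.algebraMap_apply (A : Type) [Ring A] [Algebra L A] (c : L) :
    algebraMap L (Conj ιL A) c = toConj ιL A (algebraMap L A (ιL c)) :=
  (Algebra.smul_def (ιL c) (1 : A)).trans (mul_one _)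

end ConjAlgebra

namespace CliffordAlgebra

variable {F L M : Type} [Field F] [Field L] [Algebra F L] {ιL : L ≃ₐ[F] L}
  [AddCommGroup M] [Module L M] {Q : QuadraticForm L M}

noncomputable def semilinearLiftConj (σ : M →ₛₗ[(ιL : L →+* L)] M)
    (hσ : ∀ m, Q (σ m) = ιL (Q m)) : CliffordAlgebra Q →ₐ[L] Conj ιL (CliffordAlgebra Q) :=
  lift Q ⟨{ toFun := fun m => toConj ιL _ (ι Q (σ m))
            map_add' := fun _ _ => congrArg (toConj ιL _) (by rw [map_add, map_add]; rfl)
            map_smul' := fun c m => congrArg (toConj ιL _) (by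
              rw [σ.map_smulₛₗ, map_smul]; rfl) },
    fun m => by
      rw [Conj.algebraMap_apply, ← hσ]
      exact ι_sq_scalar Q (σ m)⟩

variable (σ : M →ₛₗ[(ιL : L →+* L)] M) (hσ : ∀ m, Q (σ m) = ιL (Q m))

noncomputable def semilinearLift : CliffordAlgebra Q →+* CliffordAlgebra Q :=
  (semilinearLiftConj σ hσ).toRingHom

@[simp]
lemma semilinearLift_ι (m : M) : semilinearLift σ hσ (ι Q m) = ι Q (σ m) :=
  lift_ι_apply (A := Conj ιL (CliffordAlgebra Q)) _ _ m

@[simp]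
lemma semilinearLift_algebraMap (c : L) :
    semilinearLift σ hσ (algebraMap L _ c) = algebraMap L _ (ιL c) :=
  ((semilinearLiftConj σ hσ).commutes c).trans (Conj.algebraMap_apply ιL _ c)

lemma semilinearLift_smul (c : L) (x : CliffordAlgebra Q) :
    semilinearLift σ hσ (c • x) = ιL c • semilinearLift σ hσ x := by
  rw [Algebra.smul_def, map_mul, semilinearLift_algebraMap, ← Algebra.smul_def]

lemma semilinearLift_mem_range_ι_pow {k : ℕ} {x : CliffordAlgebra Q}
    (hx : x ∈ LinearMap.range (ι Q) ^ k) :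
    semilinearLift σ hσ x ∈ LinearMap.range (ι Q) ^ k := by
  induction hx using Submodule.pow_induction_on_right' with
  | algebraMap r =>
    rw [semilinearLift_algebraMap]
    exact Submodule.algebraMap_mem _
  | add _ _ _ _ _ hx hy =>
    rw [map_add]
    exact add_mem hx hy
  | mul_mem _ _ _ hx _ hm =>
    obtain ⟨m, rfl⟩ := hm
    rw [map_mul, semilinearLift_ι]
    exact Submodule.mul_mem_mul hx (LinearMap.mem_range_self _ _)

lemma semilinearLift_mem_evenOdd {i : ZMod 2} {x : CliffordAlgebra Q} (hx : x ∈ evenOdd Q i) :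
    semilinearLift σ hσ x ∈ evenOdd Q i := by
  induction x, hx using evenOdd_induction with
  | range_ι_pow v hv =>
    exact Submodule.mem_iSup_of_mem ⟨i.val, i.natCast_zmod_val⟩
      (semilinearLift_mem_range_ι_pow σ hσ hv)
  | add _ _ _ _ hx hy =>
    rw [map_add]
    exact add_mem hx hy
  | ι_mul_ι_mul _ _ _ _ hx =>
    rw [map_mul, map_mul, semilinearLift_ι, semilinearLift_ι]
    exact zero_add i ▸ SetLike.mul_mem_graded (ι_mul_ι_mem_evenOdd_zero Q _ _) hx

lemma semilinearLift_reverse (x : CliffordAlgebra Q) :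
    semilinearLift σ hσ (reverse x) = reverse (semilinearLift σ hσ x) := by
  induction x using CliffordAlgebra.induction with
  | algebraMap r => simp only [reverse.commutes, semilinearLift_algebraMap]
  | ι m => simp only [reverse_ι, semilinearLift_ι]
  | mul a b ha hb => rw [reverse.map_mul, map_mul, ha, hb, map_mul, reverse.map_mul]
  | add a b ha hb => rw [map_add, map_add, ha, hb, map_add, map_add]

lemma semilinearLift_semilinearLift (hι : Function.Involutive ιL) (hσι : Function.Involutive σ)
    (x : CliffordAlgebra Q) : semilinearLift σ hσ (semilinearLift σ hσ x) = x := by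
  induction x using CliffordAlgebra.induction with
  | algebraMap r => rw [semilinearLift_algebraMap, semilinearLift_algebraMap, hι r]
  | ι m => rw [semilinearLift_ι, semilinearLift_ι, hσι m]
  | mul a b ha hb => rw [map_mul, map_mul, ha, hb]
  | add a b ha hb => rw [map_add, map_add, ha, hb]

noncomputable def semilinearLiftEquiv (hι : Function.Involutive ιL)
    (hσι : Function.Involutive σ) : CliffordAlgebra Q ≃+* CliffordAlgebra Q :=
  { semilinearLift σ hσ with
    invFun := semilinearLift σ hσ
    left_inv := semilinearLift_semilinearLift σ hσ hι hσι
    right_inv := semilinearLift_semilinearLift σ hσ hι hσι }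

end CliffordAlgebra

section Switch
variable {F L : Type} [Field F] [Field L] [Algebra F L] {ιL : L ≃ₐ[F] L}
  (hι : Function.Involutive ιL) (V : Type) [AddCommGroup V] [Module L V]

def switch : (V × Conj ιL V) →ₛₗ[(ιL : L →+* L)] V × Conj ιL V where
  toFun p := (ofConj ιL V p.2, toConj ιL V p.1)
  map_add' _ _ := rfl
  map_smul' c p := Prod.ext rfl (congrArg (toConj ιL V) (congrArg (· • p.1) (hι c).symm))

lemma switch_involutive : Function.Involutive (switch hι V) := fun _ => rfl

lemma prod_conjForm_switch (ψ : QuadraticForm L V) (p : V × Conj ιL V) :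
    ψ.prod (conjForm ιL V hι ψ) (switch hι V p) = ιL (ψ.prod (conjForm ιL V hι ψ) p) := by
  show ψ (ofConj ιL V p.2) + ιL (ψ p.1) = ιL (ψ p.1 + ιL (ψ (ofConj ιL V p.2)))
  rw [map_add, hι, add_comm]

end Switch

theorem switch_extends_to_clifford_general
    (F L : Type) [Field F] [Field L] [Algebra F L]
    (ιL : L ≃ₐ[F] L) (hι : Function.Involutive ιL)
    (V : Type) [AddCommGroup V] [Module L V]
    (ψ : QuadraticForm L V) :
    ∃ S : CliffordAlgebra (ψ.prod (conjForm ιL V hι ψ)) ≃+*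
        CliffordAlgebra (ψ.prod (conjForm ιL V hι ψ)),
      -- ι-semilinear
      (∀ (c : L) (x : CliffordAlgebra (ψ.prod (conjForm ιL V hι ψ))),
        S (c • x) = ιL c • S x) ∧
      -- extends the switch map
      (∀ p : V × Conj ιL V,
        S (CliffordAlgebra.ι (ψ.prod (conjForm ιL V hι ψ)) p) =
          CliffordAlgebra.ι (ψ.prod (conjForm ιL V hι ψ)) (ofConj ιL V p.2, toConj ιL V p.1)) ∧
      -- of order two
      (∀ x, S (S x) = x) ∧
      -- preserves the even/odd grading
      (∀ (i : ZMod 2) (x : CliffordAlgebra (ψ.prod (conjForm ιL V hι ψ))),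
        x ∈ CliffordAlgebra.evenOdd (ψ.prod (conjForm ιL V hι ψ)) i →
          S x ∈ CliffordAlgebra.evenOdd (ψ.prod (conjForm ιL V hι ψ)) i) ∧
      -- commutes with the canonical involution
      (∀ x, S (CliffordAlgebra.reverse (Q := ψ.prod (conjForm ιL V hι ψ)) x) =
        CliffordAlgebra.reverse (Q := ψ.prod (conjForm ιL V hι ψ)) (S x)) := by
  have hσ := prod_conjForm_switch hι V ψ
  have hσι := switch_involutive hι V
  open CliffordAlgebra in
  exact ⟨semilinearLiftEquiv _ hσ hι hσι, semilinearLift_smul _ hσ, semilinearLift_ι _ hσ,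
    semilinearLift_semilinearLift _ hσ hι hσι, fun _ _ => semilinearLift_mem_evenOdd _ hσ,
    semilinearLift_reverse _ hσ⟩

/-- The switch map `(v,w) ↦ (w,v)` on `V ⊕ ^ιV` extends to an additive, `ι`-semilinear ring
automorphism of order 2 of the Clifford algebra of `ψ ⊥ ^ιψ` which preserves the even/odd
grading and commutes with the canonical involution. -/
theorem switch_extends_to_clifford
    (F L : Type) [Field F] [Field L] [Algebra F L]
    (hF : (2:F) ≠ 0) (hquad : Module.finrank F L = 2)
    (ιL : L ≃ₐ[F] L) (hnontriv : ιL ≠ AlgEquiv.refl) (hι : Function.Involutive ιL)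
    (V : Type) [AddCommGroup V] [Module L V] [FiniteDimensional L V]
    (ψ : QuadraticForm L V) :
    ∃ S : CliffordAlgebra (ψ.prod (conjForm ιL V hι ψ)) ≃+*
        CliffordAlgebra (ψ.prod (conjForm ιL V hι ψ)),
      -- ι-semilinear
      (∀ (c : L) (x : CliffordAlgebra (ψ.prod (conjForm ιL V hι ψ))),
        S (c • x) = ιL c • S x) ∧
      -- extends the switch map
      (∀ p : V × Conj ιL V,
        S (CliffordAlgebra.ι (ψ.prod (conjForm ιL V hι ψ)) p) =
          CliffordAlgebra.ι (ψ.prod (conjForm ιL V hι ψ)) (ofConj ιL V p.2, toConj ιL V p.1)) ∧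
      -- of order two
      (∀ x, S (S x) = x) ∧
      -- preserves the even/odd grading
      (∀ (i : ZMod 2) (x : CliffordAlgebra (ψ.prod (conjForm ιL V hι ψ))),
        x ∈ CliffordAlgebra.evenOdd (ψ.prod (conjForm ιL V hι ψ)) i →
          S x ∈ CliffordAlgebra.evenOdd (ψ.prod (conjForm ιL V hι ψ)) i) ∧
      -- commutes with the canonical involution
      (∀ x, S (CliffordAlgebra.reverse (Q := ψ.prod (conjForm ιL V hι ψ)) x) =
        CliffordAlgebra.reverse (Q := ψ.prod (conjForm ιL V hι ψ)) (S x)) :=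
  switch_extends_to_clifford_general F L ιL hι V ψ
end
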